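/- arXiv:2306.07024 — 6 statements merged into one kernel-verified Lean document; each statement's English description precedes it below -/
import Mathlib

section
/- Let (Ω, m, μ) be a probability space, let 𝒢 ≤ ℱ ≤ m be sub-σ-algebras, let Z : Ω → ℝ be ℱ-measurable and square-integrable, and let ε : Ω → ℝ be square-integrable and independent of the σ-algebra ℱ. Set Y = Z + ε. Then E[(E[Y|ℱ] − E[Y|𝒢])²] = E[(Z − E[Z|𝒢])²]. -/
/-! Conditioning on `ℱ` or on `𝒢 ≤ ℱ` replaces the noise `ε`, independent of both, by its mean
`E[ε]`, which cancels in the difference; and `E[Z|ℱ] = Z`. -/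

open MeasureTheory ProbabilityTheory

namespace ProbabilityTheory

variable {Ω β : Type*} {m₂ m : MeasurableSpace Ω} {μ : Measure Ω}

theorem Indep.comap_congr_ae [mβ : MeasurableSpace β] {f g : Ω → β}
    (h : Indep (MeasurableSpace.comap f mβ) m₂ μ) (hfg : f =ᵐ[μ] g) :
    Indep (MeasurableSpace.comap g mβ) m₂ μ := by
  rw [Indep_iff] at h ⊢
  rintro _ t ⟨B, hB, rfl⟩ ht
  have hpre : g ⁻¹' B =ᵐ[μ] f ⁻¹' B := by
    filter_upwards [hfg] with ω hω
    change (g ω ∈ B) = (f ω ∈ B)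
    rw [hω]
  rw [measure_congr (hpre.inter (Filter.EventuallyEq.refl _ t)), measure_congr hpre]
  exact h _ _ ⟨B, hB, rfl⟩ ht

end ProbabilityTheory

namespace MeasureTheory

variable {Ω E : Type*} {m₂ m : MeasurableSpace Ω} {μ : Measure Ω} [IsFiniteMeasure μ]
  [NormedAddCommGroup E] [NormedSpace ℝ E] [CompleteSpace E]
  [MeasurableSpace E] [BorelSpace E] [SecondCountableTopology E]

theorem condExp_eq_integral_of_indep {f : Ω → E} (hm₂ : m₂ ≤ m)
    (hf : AEStronglyMeasurable f μ) (hindep : Indep (MeasurableSpace.comap f inferInstance) m₂ μ) :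
    μ[f|m₂] =ᵐ[μ] fun _ => μ[f] := by
  set g := hf.mk f
  have hg : Measurable g := hf.stronglyMeasurable_mk.measurable
  calc μ[f|m₂] =ᵐ[μ] μ[g|m₂] := condExp_congr_ae hf.ae_eq_mk
    _ =ᵐ[μ] fun _ => μ[g] :=
      condExp_indep_eq hg.comap_le hm₂ (Measurable.of_comap_le le_rfl).stronglyMeasurable
        (hindep.comap_congr_ae hf.ae_eq_mk)
    _ = fun _ => μ[f] := by rw [integral_congr_ae hf.ae_eq_mk]

theorem condExp_add_indep_eq {Z ε : Ω → E} (hm₂ : m₂ ≤ m) (hZ : Integrable Z μ)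
    (hε : Integrable ε μ) (hindep : Indep (MeasurableSpace.comap ε inferInstance) m₂ μ) :
    μ[Z + ε|m₂] =ᵐ[μ] μ[Z|m₂] + fun _ => μ[ε] :=
  (condExp_add hZ hε m₂).trans
    (Filter.EventuallyEq.rfl.add (condExp_eq_integral_of_indep hm₂ hε.1 hindep))

end MeasureTheory

/-- In the additive-noise model `Y = Z + ε` with `Z` being `ℱ`-measurable and `ε` independent
of `ℱ`, the exogenous noise drops out of the test statistic:
`E[(E[Y|ℱ] − E[Y|𝒢])²] = E[(Z − E[Z|𝒢])²]`. -/
theorem drcfs_stmt8 {Ω : Type*} {m : MeasurableSpace Ω} (μ : Measure Ω) [IsProbabilityMeasure μ]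
    (𝒢 ℱ : MeasurableSpace Ω) (h𝒢ℱ : 𝒢 ≤ ℱ) (hℱm : ℱ ≤ m)
    (Z : Ω → ℝ) (hZmeas : StronglyMeasurable[ℱ] Z) (hZ2 : MemLp Z 2 μ)
    (ε : Ω → ℝ) (hε2 : MemLp ε 2 μ)
    (hindep : Indep (MeasurableSpace.comap ε inferInstance) ℱ μ)
    (Y : Ω → ℝ) (hYdef : Y = fun ω => Z ω + ε ω) :
    ∫ ω, ((μ[Y|ℱ]) ω - (μ[Y|𝒢]) ω) ^ 2 ∂μ = ∫ ω, (Z ω - (μ[Z|𝒢]) ω) ^ 2 ∂μ := by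
  have hZ : Integrable Z μ := hZ2.integrable one_le_two
  have hε : Integrable ε μ := hε2.integrable one_le_two
  have hYℱ := condExp_add_indep_eq hℱm hZ hε hindep
  rw [condExp_of_stronglyMeasurable hℱm hZmeas hZ] at hYℱ
  have hY𝒢 := condExp_add_indep_eq (h𝒢ℱ.trans hℱm) hZ hε (indep_of_indep_of_le_right hindep h𝒢ℱ)
  obtain rfl : Y = Z + ε := hYdef
  refine integral_congr_ae ?_
  filter_upwards [hYℱ, hY𝒢] with ω hℱω h𝒢ω
  simp only [hℱω, h𝒢ω, Pi.add_apply]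
  ring
end

section
/- Let (Ω, m, μ) be a probability space, let 𝒢 ≤ ℱ ≤ m be sub-σ-algebras, let Z : Ω → ℝ be ℱ-measurable and square-integrable, and let ε : Ω → ℝ be square-integrable and independent of the σ-algebra ℱ. Set Y = Z + ε. Then E[(E[Y|ℱ] − E[Y|𝒢])²] = 0 if and only if Z = E[Z|𝒢] μ-almost everywhere. -/
open MeasureTheory ProbabilityTheory

/-!
Independence of `ε` from `ℱ ⊇ 𝒢` makes both `E[ε|ℱ]` and `E[ε|𝒢]` the constant `E[ε]`, while
`E[Z|ℱ] = Z`; hence `E[Y|ℱ] − E[Y|𝒢] = Z − E[Z|𝒢]` a.e., and the integral of its square vanishes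
exactly when this square-integrable difference is zero a.e.
-/

theorem ProbabilityTheory.Indep.comap_congr_ae_s9 {Ω β : Type*} {m₂ m : MeasurableSpace Ω}
    [MeasurableSpace β] {μ : Measure Ω} {f f' : Ω → β}
    (h : Indep (MeasurableSpace.comap f inferInstance) m₂ μ) (hff' : f =ᵐ[μ] f') :
    Indep (MeasurableSpace.comap f' inferInstance) m₂ μ := by
  rw [Indep_iff] at h ⊢
  rintro _ t ⟨s, hs, rfl⟩ ht
  have hpre : f' ⁻¹' s =ᵐ[μ] f ⁻¹' s := hff'.symm.preimage s
  rw [measure_congr (hpre.inter (.refl _ t)), measure_congr hpre]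
  exact h _ t ⟨s, hs, rfl⟩ ht

theorem MeasureTheory.condExp_indep_comap_eq {Ω E : Type*} [NormedAddCommGroup E]
    [NormedSpace ℝ E] [CompleteSpace E] [MeasurableSpace E] [BorelSpace E]
    [SecondCountableTopology E] {m₂ m : MeasurableSpace Ω} {μ : Measure Ω} {f : Ω → E}
    (hle : m₂ ≤ m) [SigmaFinite (μ.trim hle)] (hf : AEStronglyMeasurable f μ)
    (hindep : Indep (MeasurableSpace.comap f inferInstance) m₂ μ) :
    μ[f | m₂] =ᵐ[μ] fun _ => μ[f] := by
  obtain ⟨g, hg, hfg⟩ := hf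
  calc μ[f | m₂] =ᵐ[μ] μ[g | m₂] := condExp_congr_ae hfg
    _ =ᵐ[μ] fun _ => μ[g] :=
      condExp_indep_eq hg.measurable.comap_le hle (comap_measurable g).stronglyMeasurable
        (hindep.comap_congr_ae_s9 hfg)
    _ = fun _ => μ[f] := by rw [integral_congr_ae hfg]

theorem MeasureTheory.integral_sq_sub_eq_zero_iff {Ω : Type*} {m : MeasurableSpace Ω}
    {μ : Measure Ω} {f g : Ω → ℝ} (hf : MemLp f 2 μ) (hg : MemLp g 2 μ) :
    ∫ ω, (f ω - g ω) ^ 2 ∂μ = 0 ↔ f =ᵐ[μ] g := by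
  rw [integral_eq_zero_iff_of_nonneg (f := fun ω => (f ω - g ω) ^ 2) (fun ω => sq_nonneg _)
    (hf.sub hg).integrable_sq]
  refine Filter.eventually_congr (.of_forall fun ω => ?_)
  simp [sub_eq_zero]

/-- Probabilistic content of Lemma 2: in the additive-noise model `Y = Z + ε`,
the test statistic `E[(E[Y|ℱ] − E[Y|𝒢])²]` vanishes if and only if
`Z = E[Z|𝒢]` almost everywhere. -/
theorem drcfs_stmt9 {Ω : Type*} {m : MeasurableSpace Ω} (μ : Measure Ω) [IsProbabilityMeasure μ]
    (𝒢 ℱ : MeasurableSpace Ω) (h𝒢ℱ : 𝒢 ≤ ℱ) (hℱm : ℱ ≤ m)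
    (Z : Ω → ℝ) (hZmeas : StronglyMeasurable[ℱ] Z) (hZ2 : MemLp Z 2 μ)
    (ε : Ω → ℝ) (hε2 : MemLp ε 2 μ)
    (hindep : Indep (MeasurableSpace.comap ε inferInstance) ℱ μ)
    (Y : Ω → ℝ) (hYdef : Y = fun ω => Z ω + ε ω) :
    ∫ ω, ((μ[Y|ℱ]) ω - (μ[Y|𝒢]) ω) ^ 2 ∂μ = 0 ↔ Z =ᵐ[μ] (μ[Z|𝒢]) := by
  have hZ : Integrable Z μ := hZ2.integrable one_le_two
  have hε : Integrable ε μ := hε2.integrable one_le_two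
  have hεℱ := condExp_indep_comap_eq hℱm hε2.1 hindep
  have hε𝒢 := condExp_indep_comap_eq (h𝒢ℱ.trans hℱm) hε2.1
    (indep_of_indep_of_le_right hindep h𝒢ℱ)
  have hYℱ : μ[Y|ℱ] =ᵐ[μ] Z + fun _ => μ[ε] := by
    rw [hYdef]
    refine (condExp_add hZ hε ℱ).trans (.add ?_ hεℱ)
    rw [condExp_of_stronglyMeasurable hℱm hZmeas hZ]
  have hY𝒢 : μ[Y|𝒢] =ᵐ[μ] μ[Z|𝒢] + fun _ => μ[ε] := by
    rw [hYdef]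
    exact (condExp_add hZ hε 𝒢).trans (.add .rfl hε𝒢)
  have hdiff : (fun ω => ((μ[Y|ℱ]) ω - (μ[Y|𝒢]) ω) ^ 2) =ᵐ[μ]
      fun ω => (Z ω - (μ[Z|𝒢]) ω) ^ 2 := by
    filter_upwards [hYℱ, hY𝒢] with ω hℱω h𝒢ω
    simp only [hℱω, h𝒢ω, Pi.add_apply, add_sub_add_right_eq_sub]
  rw [integral_congr_ae hdiff, integral_sq_sub_eq_zero_iff hZ2 (hZ2.condExp one_le_two)]
end

section
/- Let (Ω, m, μ) be a probability space, let ℱ ≤ m be a sub-σ-algebra, let Y : Ω → ℝ be square-integrable, and set g₀ = E[Y|ℱ]. Then for all ℱ-measurable square-integrable functions g, α : Ω → ℝ, we have E[Y·g + α·(Y − g)] − E[Y·g₀] = − E[(α − g₀)·(g − g₀)]. -/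
/-!
Pointwise, `Y g + α (Y - g) - Y g₀ + (α - g₀)(g - g₀) = (g + α - g₀)(Y - g₀)`, and the residual
`Y - E[Y|ℱ]` is orthogonal in `L²` to every `ℱ`-measurable square-integrable function.
-/

open MeasureTheory ProbabilityTheory

theorem integral_mul_condExp_of_stronglyMeasurable {Ω : Type*} {m mΩ : MeasurableSpace Ω}
    {μ : Measure Ω} (hm : m ≤ mΩ) [SigmaFinite (μ.trim hm)] {f Y : Ω → ℝ}
    (hf : StronglyMeasurable[m] f) (hfY : Integrable (f * Y) μ) (hY : Integrable Y μ) :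
    ∫ ω, (f * μ[Y|m]) ω ∂μ = ∫ ω, (f * Y) ω ∂μ :=
  calc ∫ ω, (f * μ[Y|m]) ω ∂μ
      = ∫ ω, (μ[f * Y|m]) ω ∂μ :=
        integral_congr_ae (condExp_mul_of_stronglyMeasurable_left hf hfY hY).symm
    _ = ∫ ω, (f * Y) ω ∂μ := integral_condExp hm

theorem integral_mul_sub_condExp_eq_zero {Ω : Type*} {m mΩ : MeasurableSpace Ω}
    {μ : Measure Ω} [IsFiniteMeasure μ] (hm : m ≤ mΩ) {f Y : Ω → ℝ}
    (hf : StronglyMeasurable[m] f) (hf2 : MemLp f 2 μ) (hY : MemLp Y 2 μ) :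
    ∫ ω, (f * (Y - μ[Y|m])) ω ∂μ = 0 := by
  have hfY : Integrable (f * Y) μ := hf2.integrable_mul hY
  rw [mul_sub, integral_sub' hfY (hf2.integrable_mul (hY.condExp one_le_two)),
    integral_mul_condExp_of_stronglyMeasurable hm hf hfY (hY.integrable one_le_two), sub_self]

/-- Mixed Bias Property of the debiased score for the moment functional `m₀(V; g) = Y·g`:
with `g₀ = E[Y|ℱ]`, for all `ℱ`-measurable square-integrable `g, α`,
`E[Y·g + α·(Y − g)] − E[Y·g₀] = − E[(α − g₀)·(g − g₀)]`. -/
theorem drcfs_stmt11 {Ω : Type*} {m : MeasurableSpace Ω} (μ : Measure Ω) [IsProbabilityMeasure μ]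
    (ℱ : MeasurableSpace Ω) (hℱm : ℱ ≤ m)
    (Y : Ω → ℝ) (hY : MemLp Y 2 μ)
    (g α : Ω → ℝ) (hgmeas : StronglyMeasurable[ℱ] g) (hαmeas : StronglyMeasurable[ℱ] α)
    (hg2 : MemLp g 2 μ) (hα2 : MemLp α 2 μ) :
    ∫ ω, (Y ω * g ω + α ω * (Y ω - g ω)) ∂μ - ∫ ω, Y ω * (μ[Y|ℱ]) ω ∂μ
      = - ∫ ω, (α ω - (μ[Y|ℱ]) ω) * (g ω - (μ[Y|ℱ]) ω) ∂μ := by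
  set g₀ := μ[Y|ℱ]
  have hg₀ : MemLp g₀ 2 μ := hY.condExp one_le_two
  have hscore : Integrable (fun ω => Y ω * g ω + α ω * (Y ω - g ω)) μ :=
    (hY.integrable_mul hg2).add (hα2.integrable_mul (hY.sub hg2))
  have hbias : Integrable (fun ω => (α ω - g₀ ω) * (g ω - g₀ ω)) μ :=
    (hα2.sub hg₀).integrable_mul (hg2.sub hg₀)
  have horth := integral_mul_sub_condExp_eq_zero hℱm
    ((hgmeas.add hαmeas).sub stronglyMeasurable_condExp) ((hg2.add hα2).sub hg₀) hY
  have hplugin : Integrable (fun ω => Y ω * g₀ ω) μ := hY.integrable_mul hg₀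
  rw [← integral_sub hscore hplugin, eq_neg_iff_add_eq_zero,
    ← integral_add (f := fun ω => Y ω * g ω + α ω * (Y ω - g ω) - Y ω * g₀ ω)
      (hscore.sub hplugin) hbias, ← horth]
  congr 1 with ω
  simp only [Pi.mul_apply, Pi.add_apply, Pi.sub_apply]
  ring
end

section
/- Let (Ω, m, μ) be a probability space, let ℱ ≤ m be a sub-σ-algebra, let Y : Ω → ℝ be square-integrable, and set g₀ = E[Y|ℱ]. Then for all ℱ-measurable square-integrable functions g, α : Ω → ℝ, we have |E[Y·g + α·(Y − g)] − E[Y·g₀]| ≤ ‖α − g₀‖_{L²(μ)} · ‖g − g₀‖_{L²(μ)}. -/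
/-!
The residual `Y - E[Y|ℱ]` is orthogonal in `L²(μ)` to every `ℱ`-measurable square-integrable
function. Writing `g₀ = E[Y|ℱ]`, the bias of the score is the pointwise identity
`Y g + α (Y - g) - Y g₀ = (g + α - g₀)(Y - g₀) - (α - g₀)(g - g₀)` integrated: the first term
integrates to zero by orthogonality, and the second is bounded by Cauchy–Schwarz.
-/

open MeasureTheory

namespace MeasureTheory

variable {Ω : Type*} {m : MeasurableSpace Ω} {μ : Measure Ω}

theorem MemLp.integrable_fun_mul {𝕜 : Type*} [NormedRing 𝕜] {p q : ENNReal}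
    [ENNReal.HolderTriple p q 1] {f g : Ω → 𝕜} (hf : MemLp f p μ) (hg : MemLp g q μ) :
    Integrable (fun ω => f ω * g ω) μ :=
  hf.integrable_mul hg

theorem abs_integral_mul_le_toReal_eLpNorm_two_mul {u v : Ω → ℝ} (hu : MemLp u 2 μ)
    (hv : MemLp v 2 μ) :
    |∫ ω, u ω * v ω ∂μ| ≤ (eLpNorm u 2 μ).toReal * (eLpNorm v 2 μ).toReal := by
  have hinner : inner ℝ (hu.toLp u) (hv.toLp v) = ∫ ω, u ω * v ω ∂μ := by
    rw [L2.inner_def]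
    refine integral_congr_ae ?_
    filter_upwards [hu.coeFn_toLp, hv.coeFn_toLp] with ω hu' hv'
    simp [hu', hv', mul_comm]
  rw [← hinner, ← Lp.norm_toLp u hu, ← Lp.norm_toLp v hv]
  exact abs_real_inner_le_norm _ _

theorem integral_mul_condExp_of_stronglyMeasurable_left {ℱ : MeasurableSpace Ω} (hℱ : ℱ ≤ m)
    [IsFiniteMeasure μ] {f Y : Ω → ℝ} (hf : StronglyMeasurable[ℱ] f)
    (hfY : Integrable (f * Y) μ) (hY : Integrable Y μ) :
    ∫ ω, f ω * (μ[Y|ℱ]) ω ∂μ = ∫ ω, f ω * Y ω ∂μ :=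
  calc ∫ ω, f ω * (μ[Y|ℱ]) ω ∂μ = ∫ ω, (μ[f * Y|ℱ]) ω ∂μ :=
        integral_congr_ae (condExp_mul_of_stronglyMeasurable_left hf hfY hY).symm
    _ = ∫ ω, f ω * Y ω ∂μ := integral_condExp hℱ

variable [IsFiniteMeasure μ] {ℱ : MeasurableSpace Ω} {Y : Ω → ℝ}

theorem integral_mul_sub_condExp_eq_zero (hℱ : ℱ ≤ m) (hY : MemLp Y 2 μ) {f : Ω → ℝ}
    (hf : StronglyMeasurable[ℱ] f) (hf2 : MemLp f 2 μ) :
    ∫ ω, f ω * (Y ω - (μ[Y|ℱ]) ω) ∂μ = 0 := by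
  simp only [mul_sub]
  rw [integral_sub (hf2.integrable_fun_mul hY) (hf2.integrable_fun_mul (hY.condExp one_le_two)),
    integral_mul_condExp_of_stronglyMeasurable_left hℱ hf (hf2.integrable_mul hY)
      (hY.integrable one_le_two), sub_self]

/-- Mixed bias property of the debiased score for the moment functional `Y · g`. -/
theorem integral_debiasedScore_sub_eq (hℱ : ℱ ≤ m) (hY : MemLp Y 2 μ) {g α : Ω → ℝ}
    (hg : StronglyMeasurable[ℱ] g) (hα : StronglyMeasurable[ℱ] α)
    (hg2 : MemLp g 2 μ) (hα2 : MemLp α 2 μ) :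
    ∫ ω, (Y ω * g ω + α ω * (Y ω - g ω)) ∂μ - ∫ ω, Y ω * (μ[Y|ℱ]) ω ∂μ
      = -∫ ω, (α ω - (μ[Y|ℱ]) ω) * (g ω - (μ[Y|ℱ]) ω) ∂μ := by
  set g₀ := μ[Y|ℱ]
  have hg₀2 : MemLp g₀ 2 μ := hY.condExp one_le_two
  have hres2 : MemLp (fun ω => Y ω - g₀ ω) 2 μ := hY.sub hg₀2
  have hf2 : MemLp (fun ω => g ω + α ω - g₀ ω) 2 μ := (hg2.add hα2).sub hg₀2
  have hαg₀ : MemLp (fun ω => α ω - g₀ ω) 2 μ := hα2.sub hg₀2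
  have hgg₀ : MemLp (fun ω => g ω - g₀ ω) 2 μ := hg2.sub hg₀2
  have horth : ∫ ω, (g ω + α ω - g₀ ω) * (Y ω - g₀ ω) ∂μ = 0 :=
    integral_mul_sub_condExp_eq_zero hℱ hY ((hg.add hα).sub stronglyMeasurable_condExp) hf2
  have hscore : Integrable (fun ω => Y ω * g ω + α ω * (Y ω - g ω)) μ :=
    (hY.integrable_fun_mul hg2).add (hα2.integrable_fun_mul (hY.sub hg2))
  rw [← integral_sub hscore (hY.integrable_fun_mul hg₀2), ← zero_sub, ← horth,
    ← integral_sub (hf2.integrable_fun_mul hres2) (hαg₀.integrable_fun_mul hgg₀)]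
  exact integral_congr_ae (Filter.Eventually.of_forall fun ω => by ring)

end MeasureTheory

/-- Doubly-robust bias bound: with `g₀ = E[Y|ℱ]`, for all `ℱ`-measurable square-integrable
`g, α`, `|E[Y·g + α·(Y − g)] − E[Y·g₀]| ≤ ‖α − g₀‖_{L²(μ)} · ‖g − g₀‖_{L²(μ)}`. -/
theorem drcfs_stmt12 {Ω : Type*} {m : MeasurableSpace Ω} (μ : Measure Ω) [IsProbabilityMeasure μ]
    (ℱ : MeasurableSpace Ω) (hℱm : ℱ ≤ m)
    (Y : Ω → ℝ) (hY : MemLp Y 2 μ)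
    (g α : Ω → ℝ) (hgmeas : StronglyMeasurable[ℱ] g) (hαmeas : StronglyMeasurable[ℱ] α)
    (hg2 : MemLp g 2 μ) (hα2 : MemLp α 2 μ) :
    |∫ ω, (Y ω * g ω + α ω * (Y ω - g ω)) ∂μ - ∫ ω, Y ω * (μ[Y|ℱ]) ω ∂μ|
      ≤ (eLpNorm (fun ω => α ω - (μ[Y|ℱ]) ω) 2 μ).toReal
          * (eLpNorm (fun ω => g ω - (μ[Y|ℱ]) ω) 2 μ).toReal := by
  rw [integral_debiasedScore_sub_eq hℱm hY hgmeas hαmeas hg2 hα2, abs_neg]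
  exact abs_integral_mul_le_toReal_eLpNorm_two_mul
    (hα2.sub (hY.condExp one_le_two)) (hg2.sub (hY.condExp one_le_two))
end

section
/- Let γ₁ = N(0,1) ⊗ N(0,1) be the product of two standard real Gaussian measures on ℝ × ℝ, and let γ₂ = N(0,2) ⊗ N(0,1/2) be the product of a centered real Gaussian with variance 2 and a centered real Gaussian with variance 1/2. Then the pushforward of γ₁ under the map (n, e) ↦ (n, n + e) equals the pushforward of γ₂ under the map (e, n) ↦ (e/2 + n, e), as measures on ℝ × ℝ. -/
/-!
Finite measures on `ℝ × ℝ` are determined by their characteristic functionals. For a linear form `L` with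
`α = L (1, 0)` and `β = L (0, 1)`, the image of the first measure under `L` is the law of
`(α + β) N + β ε` with `N, ε` independent `N(0, 1)`, that of the second the law of
`α N + (α / 2 + β) ε` with `N ~ N(0, 1/2)`, `ε ~ N(0, 2)`; both are centred Gaussians of variance
`(α + β)² + β² = α² / 2 + 2 (α / 2 + β)²`.
-/

open MeasureTheory ProbabilityTheory Complex
open scoped NNReal

section LinearForms

variable {R M : Type*} [Semiring R] [TopologicalSpace R] [AddCommMonoid M] [Module R M]
  [TopologicalSpace M]

lemma ContinuousLinearMap.apply_eq_smul_apply_one (L : R →L[R] M) (x : R) : L x = x • L 1 := by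
  rw [← L.map_smul, smul_eq_mul, mul_one]

lemma ContinuousLinearMap.apply_eq_fst_smul_add_snd_smul (L : R × R →L[R] M) (p : R × R) :
    L p = p.1 • L (1, 0) + p.2 • L (0, 1) := by
  conv_lhs => rw [show p = p.1 • (1, 0) + p.2 • (0, 1) by ext <;> simp]
  rw [map_add, map_smul, map_smul]

end LinearForms

lemma charFunDual_eq_charFun_apply_one (μ : Measure ℝ) (L : StrongDual ℝ ℝ) :
    charFunDual μ L = charFun μ (L 1) := by
  rw [charFunDual_apply, charFun_apply_real]
  congr with x
  rw [L.apply_eq_smul_apply_one x, smul_eq_mul, ofReal_mul, mul_comm (x : ℂ)]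

lemma charFunDual_gaussianReal_prod (m₁ m₂ : ℝ) (v₁ v₂ : ℝ≥0) (L : StrongDual ℝ (ℝ × ℝ)) :
    charFunDual ((gaussianReal m₁ v₁).prod (gaussianReal m₂ v₂)) L
      = cexp (L (m₁, m₂) * I - (v₁ * L (1, 0) ^ 2 + v₂ * L (0, 1) ^ 2) / 2) := by
  rw [charFunDual_prod, charFunDual_eq_charFun_apply_one, charFunDual_eq_charFun_apply_one,
    charFun_gaussianReal, charFun_gaussianReal, ← Complex.exp_add,
    L.apply_eq_fst_smul_add_snd_smul (m₁, m₂)]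
  simp only [ContinuousLinearMap.comp_apply, ContinuousLinearMap.inl_apply,
    ContinuousLinearMap.inr_apply, smul_eq_mul, ofReal_add, ofReal_mul]
  ring_nf

/-- Example 2 of the paper (necessity of Axiom (C)): the law of `(N, N + ε)` with
`N, ε` i.i.d. `N(0,1)` equals the law of `(ε/2 + N, ε)` with `ε ~ N(0,2)` and `N ~ N(0,1/2)`
independent. -/
theorem drcfs_stmt14 :
    ((gaussianReal 0 1).prod (gaussianReal 0 1)).map (fun p : ℝ × ℝ => (p.1, p.1 + p.2))
      = ((gaussianReal 0 2).prod (gaussianReal 0 (1 / 2))).map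
          (fun p : ℝ × ℝ => (p.1 / 2 + p.2, p.1)) := by
  let f : (ℝ × ℝ) →L[ℝ] ℝ × ℝ := (ContinuousLinearMap.fst ℝ ℝ ℝ).prod
    (ContinuousLinearMap.fst ℝ ℝ ℝ + ContinuousLinearMap.snd ℝ ℝ ℝ)
  let g : (ℝ × ℝ) →L[ℝ] ℝ × ℝ := ((1 / 2 : ℝ) • ContinuousLinearMap.fst ℝ ℝ ℝ
    + ContinuousLinearMap.snd ℝ ℝ ℝ).prod (ContinuousLinearMap.fst ℝ ℝ ℝ)
  have hf : (fun p : ℝ × ℝ => (p.1, p.1 + p.2)) = f := rfl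
  have hg : (fun p : ℝ × ℝ => (p.1 / 2 + p.2, p.1)) = g := by
    funext p
    simp [g, div_eq_inv_mul]
  rw [hf, hg]
  refine Measure.ext_of_charFunDual (funext fun L => ?_)
  rw [charFunDual_map, charFunDual_map, charFunDual_gaussianReal_prod,
    charFunDual_gaussianReal_prod]
  obtain ⟨α, β, hL⟩ : ∃ α β : ℝ, ⇑L = fun p => p.1 * α + p.2 * β :=
    ⟨_, _, funext L.apply_eq_fst_smul_add_snd_smul⟩
  congr 1
  simp only [ContinuousLinearMap.comp_apply, ContinuousLinearMap.prod_apply,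
    ContinuousLinearMap.coe_fst', ContinuousLinearMap.coe_snd', add_apply, smul_apply, smul_eq_mul,
    hL, f, g]
  push_cast
  ring
end

section
/- Let Σ be the 2×2 real matrix with all entries equal to 1, which is positive semidefinite. Then the centered multivariate Gaussian measure on ℝ² with covariance matrix Σ equals the pushforward of the standard real Gaussian measure N(0,1) under the map z ↦ (z, z). -/
/-!
Both measures are centered Gaussians with covariance the all-ones matrix `J`. The law of
`√J · N` is `multivariateGaussian 0 J`, since the spectral formula for `√J` is `CFC.sqrt J`;
and the law of `z ↦ z • (1, 1)` under `N(0,1)` has characteristic function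
`t ↦ exp (-(t₀ + t₁)² / 2) = exp (-⟪t, J t⟫ / 2)`, the one of `multivariateGaussian 0 J`.
-/

open MeasureTheory ProbabilityTheory

/-- The centered multivariate Gaussian measure on `ℝ²` (`EuclideanSpace ℝ (Fin 2)`) with
positive semidefinite covariance matrix `S`, defined as the law of `√S · N` where `N` is a
standard Gaussian vector. -/
noncomputable def centeredGaussian2 {S : Matrix (Fin 2) (Fin 2) ℝ} (hS : S.PosSemidef) :
    Measure (EuclideanSpace ℝ (Fin 2)) :=
  (Measure.pi fun _ : Fin 2 => gaussianReal 0 1).map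
    fun x => (WithLp.equiv 2 (Fin 2 → ℝ)).symm ((hS.1.eigenvectorUnitary.1 * Matrix.diagonal ((RCLike.ofReal : ℝ → ℝ) ∘ (√·) ∘ hS.1.eigenvalues) *
      (star hS.1.eigenvectorUnitary : Matrix (Fin 2) (Fin 2) ℝ)).mulVec x)

open Matrix WithLp
open scoped MatrixOrder ComplexOrder

theorem Matrix.PosSemidef.sqrt_eq_eigenvectorUnitary_mul_diagonal {n 𝕜 : Type*} [Fintype n]
    [DecidableEq n] [RCLike 𝕜] {S : Matrix n n 𝕜} (hS : S.PosSemidef) :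
    CFC.sqrt S = hS.1.eigenvectorUnitary.1 *
      diagonal ((RCLike.ofReal : ℝ → 𝕜) ∘ (√·) ∘ hS.1.eigenvalues) *
      (star hS.1.eigenvectorUnitary : Matrix n n 𝕜) := by
  rw [CFC.sqrt_eq_real_sqrt S hS.nonneg, cfcₙ_eq_cfc, hS.1.cfc_eq]
  rfl

theorem map_pi_gaussianReal_sqrt_mulVec {ι : Type*} [Fintype ι] [DecidableEq ι]
    {S : Matrix ι ι ℝ} :
    (Measure.pi fun _ : ι => gaussianReal 0 1).map (fun x => toLp 2 (CFC.sqrt S *ᵥ x)) =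
      multivariateGaussian 0 S := by
  rw [multivariateGaussian, ← map_pi_eq_stdGaussian, Measure.map_map (by fun_prop) (by fun_prop)]
  simp [Function.comp_def]

theorem centeredGaussian2_eq_multivariateGaussian {S : Matrix (Fin 2) (Fin 2) ℝ}
    (hS : S.PosSemidef) : centeredGaussian2 hS = multivariateGaussian 0 S := by
  rw [centeredGaussian2, ← hS.sqrt_eq_eigenvectorUnitary_mul_diagonal]
  exact map_pi_gaussianReal_sqrt_mulVec

theorem charFun_map_smul_const {E : Type*} [NormedAddCommGroup E] [InnerProductSpace ℝ E]
    [MeasurableSpace E] [BorelSpace E] (μ : Measure ℝ) (v t : E) :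
    charFun (μ.map (· • v)) t = charFun μ (inner ℝ v t) := by
  rw [charFun_apply, charFun_apply, integral_map (by fun_prop) (by fun_prop)]
  simp [inner_smul_left, mul_comm]

theorem posSemidef_allOnes_fin_two : (!![1, 1; 1, 1] : Matrix (Fin 2) (Fin 2) ℝ).PosSemidef := by
  convert posSemidef_vecMulVec_self_star ![(1 : ℝ), 1]
  ext i j
  fin_cases i <;> fin_cases j <;> simp [vecMulVec]

/-- Example 1 of the paper (necessity of Axiom (B)): the 2×2 all-ones matrix is positive
semidefinite, and the centered multivariate Gaussian on `ℝ²` with this covariance matrix equals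
the pushforward of the standard real Gaussian `N(0,1)` under `z ↦ (z, z)`. -/
theorem drcfs_stmt15 :
    ∃ hS : (!![1, 1; 1, 1] : Matrix (Fin 2) (Fin 2) ℝ).PosSemidef,
      centeredGaussian2 hS
        = (gaussianReal 0 1).map (fun z : ℝ => (WithLp.equiv 2 (Fin 2 → ℝ)).symm ![z, z]) := by
  refine ⟨posSemidef_allOnes_fin_two, ?_⟩
  have hdiag : (fun z : ℝ => (WithLp.equiv 2 (Fin 2 → ℝ)).symm ![z, z]) =
      (· • toLp 2 ![(1 : ℝ), 1]) := by
    funext z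
    ext i
    fin_cases i <;> simp
  rw [centeredGaussian2_eq_multivariateGaussian, hdiag]
  refine Measure.ext_of_charFun (funext fun t => ?_)
  have hquad : ofLp t ⬝ᵥ !![1, 1; 1, 1] *ᵥ ofLp t = inner ℝ (toLp 2 ![(1 : ℝ), 1]) t ^ 2 := by
    simp only [EuclideanSpace.inner_eq_star_dotProduct, dotProduct, mulVec, Fin.sum_univ_two,
      of_apply, cons_val', cons_val_fin_one, cons_val_zero, cons_val_one, Pi.star_apply,
      star_trivial, one_mul, mul_one]
    ring
  rw [charFun_multivariateGaussian posSemidef_allOnes_fin_two, charFun_map_smul_const,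
    charFun_gaussianReal, hquad]
  simp
end
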